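/- arXiv:1912.03342 — 2 statements merged into one kernel-verified Lean document; each statement's English description precedes it below -/
import Mathlib

section
/- Let λ be a singular (or more generally uncountable) cardinal and suppose δ < λ is an uncountable cardinal such that there exists a uniform δ-complete weakly normal ultrafilter D over acc(λ⁺). Then for every C-sequence ⟨C_β : β < λ⁺⟩ over λ⁺ there exists A ∈ [λ⁺]^{λ⁺} such that for every B ∈ [A]^{<δ} there exists β < λ⁺ with B ⊆ C_β. -/
noncomputable section

open Set

namespace CSeq

/-- `#s = c`, phrased with a universe lift (sets of ordinals live in `Type 1`). -/
def MkEq {α : Type 1} (s : Set α) (c : Cardinal.{0}) : Prop :=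
  Cardinal.mk s = Cardinal.lift.{1} c

def MkLe {α : Type 1} (s : Set α) (c : Cardinal.{0}) : Prop :=
  Cardinal.mk s ≤ Cardinal.lift.{1} c

def MkLt {α : Type 1} (s : Set α) (c : Cardinal.{0}) : Prop :=
  Cardinal.mk s < Cardinal.lift.{1} c

/-- The strict supremum `ssup(a)` of a set of ordinals. -/
def ssup (a : Set Ordinal.{0}) : Ordinal.{0} := sSup ((· + 1) '' a)

/-- `acc⁺(a) = {α < ssup a | sup (a ∩ α) = α > 0}`. -/
def accPlus (a : Set Ordinal.{0}) : Set Ordinal.{0} :=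
  {α | α < ssup a ∧ 0 < α ∧ sSup (a ∩ Iio α) = α}

/-- `acc(a) = a ∩ acc⁺(a)`. -/
def acc (a : Set Ordinal.{0}) : Set Ordinal.{0} := a ∩ accPlus a

/-- A set of ordinals is closed below `β`. -/
def IsClosedIn (C : Set Ordinal.{0}) (β : Ordinal.{0}) : Prop :=
  ∀ α, α < β → 0 < α → sSup (C ∩ Iio α) = α → α ∈ C

/-- A club (closed and unbounded set) in `β`. -/
def IsClubIn (C : Set Ordinal.{0}) (β : Ordinal.{0}) : Prop :=
  C ⊆ Iio β ∧ (∀ α < β, ∃ γ ∈ C, α ≤ γ) ∧ IsClosedIn C β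

/-- A stationary subset of `β`: one meeting every club in `β`. -/
def IsStationaryIn (S : Set Ordinal.{0}) (β : Ordinal.{0}) : Prop :=
  ∀ C, IsClubIn C β → (S ∩ C).Nonempty

/-- A C-sequence over a set `Γ` of ordinals. -/
def IsCSeqOn (Γ : Set Ordinal.{0}) (C : Ordinal.{0} → Set Ordinal.{0}) : Prop :=
  ∀ β ∈ Γ, C β ⊆ Iio β ∧ IsClosedIn (C β) β ∧ sSup (C β) = sSup (Iio β)

/-- A C-sequence over `κ`. -/
def IsCSeq (κ : Ordinal.{0}) (C : Ordinal.{0} → Set Ordinal.{0}) : Prop :=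
  IsCSeqOn (Iio κ) C

/-- The covering relation underlying the C-sequence number: there are `Δ ∈ [κ]^κ` and
`b : κ → [Γ]^χ` with `Δ ∩ α ⊆ ⋃_{β ∈ b α} C β` for all `α < κ`. -/
def CSeqCovers (κ : Cardinal.{0}) (Γ : Set Ordinal.{0})
    (C : Ordinal.{0} → Set Ordinal.{0}) (χ : Cardinal.{0}) : Prop :=
  ∃ (Δ : Set Ordinal.{0}) (b : Ordinal.{0} → Set Ordinal.{0}),
    Δ ⊆ Iio κ.ord ∧ MkEq Δ κ ∧
    (∀ α < κ.ord, b α ⊆ Γ ∧ MkEq (b α) χ) ∧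
    ∀ α < κ.ord, Δ ∩ Iio α ⊆ ⋃ β ∈ b α, C β

/-- `χ(vec C)` for a C-sequence over `Γ ⊆ κ`. -/
def chiOfOn (κ : Cardinal.{0}) (Γ : Set Ordinal.{0})
    (C : Ordinal.{0} → Set Ordinal.{0}) : Cardinal.{0} :=
  sInf {χ : Cardinal.{0} | χ ≤ κ ∧ CSeqCovers κ Γ C χ}

/-- `χ(vec C)` for a C-sequence over `κ`. -/
def chiOf (κ : Cardinal.{0}) (C : Ordinal.{0} → Set Ordinal.{0}) : Cardinal.{0} :=
  chiOfOn κ (Iio κ.ord) C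

/-- The C-sequence number `χ(κ)`. -/
def chiNum (κ : Cardinal.{0}) : Cardinal.{0} :=
  sInf {χ : Cardinal.{0} | χ ≤ κ ∧ ∀ C, IsCSeq κ.ord C → CSeqCovers κ (Iio κ.ord) C χ}

/-- The C-sequence spectrum of `κ`: the infinite values of `χ(vec C)`. -/
def spec (κ : Cardinal.{0}) : Set Cardinal.{0} :=
  {χ | Cardinal.aleph0 ≤ χ ∧ ∃ C, IsCSeq κ.ord C ∧ chiOf κ C = χ}

/-- `sup (reg κ)`, the supremum of the infinite regular cardinals below `κ`. -/
def supReg (κ : Cardinal.{0}) : Cardinal.{0} :=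
  sSup {ν : Cardinal.{0} | ν.IsRegular ∧ ν < κ}

/-- `acc(κ)`: the set of nonzero limit ordinals below `κ`. -/
def accOrd (κ : Ordinal.{0}) : Set Ordinal.{0} := {β | β < κ ∧ Order.IsSuccLimit β}

/-- `Tr(S)`: the set of `β < κ` of uncountable cofinality in which `S` reflects. -/
def TrSet (κ : Ordinal.{0}) (S : Set Ordinal.{0}) : Set Ordinal.{0} :=
  {β | β < κ ∧ Cardinal.aleph0 < β.cof ∧ IsStationaryIn (S ∩ Iio β) β}

/-- The order type of a set of ordinals (as an ordinal one universe up). -/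
def otp (s : Set Ordinal.{0}) : Ordinal.{1} :=
  Ordinal.type (Subrel ((· < ·) : Ordinal.{0} → Ordinal.{0} → Prop) (· ∈ s))

/-- `D^c_{≤ i}(β) = {α < β | c(α, β) ≤ i}`. -/
def DleI (c : Ordinal.{0} → Ordinal.{0} → Ordinal.{0}) (i β : Ordinal.{0}) :
    Set Ordinal.{0} :=
  {α | α < β ∧ c α β ≤ i}

/-- The coloring `c` takes pairs from `κ` to colors `< θ`. -/
def ColoringInto (κ θ : Ordinal.{0}) (c : Ordinal.{0} → Ordinal.{0} → Ordinal.{0}) : Prop :=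
  ∀ α β, α < β → β < κ → c α β < θ

/-- `S`-closedness of a coloring. -/
def IsClosedColoringOn (S : Set Ordinal.{0}) (κ θ : Ordinal.{0})
    (c : Ordinal.{0} → Ordinal.{0} → Ordinal.{0}) : Prop :=
  ∀ β < κ, ∀ i < θ, ∀ α ∈ S, α < β → 0 < α →
    sSup (DleI c i β ∩ Iio α) = α → α ∈ DleI c i β

/-- Closedness of a coloring. -/
def IsClosedColoring (κ θ : Ordinal.{0})
    (c : Ordinal.{0} → Ordinal.{0} → Ordinal.{0}) : Prop :=
  ∀ β < κ, ∀ i < θ, ∀ α, α < β → 0 < α →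
    sSup (DleI c i β ∩ Iio α) = α → α ∈ DleI c i β

/-- `c` witnesses `U(κ, μ, θ, χ)`. -/
def WitnessU (κ μ θ χ : Cardinal.{0})
    (c : Ordinal.{0} → Ordinal.{0} → Ordinal.{0}) : Prop :=
  ∀ χ' : Cardinal.{0}, χ' < χ →
    ∀ 𝒜 : Set (Set Ordinal.{0}),
      (∀ a ∈ 𝒜, a ⊆ Iio κ.ord ∧ MkEq a χ') → MkEq 𝒜 κ → 𝒜.Pairwise Disjoint →
    ∀ i, i < θ.ord →
      ∃ ℬ ⊆ 𝒜, MkEq ℬ μ ∧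
        ∀ a ∈ ℬ, ∀ b ∈ ℬ, (∀ α ∈ a, ∀ β ∈ b, α < β) →
          ∀ α ∈ a, ∀ β ∈ b, i < c α β

/-- An ultrafilter over a set `X` of ordinals, presented as a family of subsets of `X`. -/
structure IsUltrafilterOn (X : Set Ordinal.{0}) (U : Set (Set Ordinal.{0})) : Prop where
  mem_subset : ∀ A ∈ U, A ⊆ X
  univ_mem : X ∈ U
  empty_notMem : ∅ ∉ U
  mem_of_superset : ∀ A ∈ U, ∀ B, B ⊆ X → A ⊆ B → B ∈ U
  inter_mem : ∀ A ∈ U, ∀ B ∈ U, A ∩ B ∈ U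
  mem_or_compl_mem : ∀ A, A ⊆ X → A ∈ U ∨ X \ A ∈ U

/-- `δ`-completeness of an ultrafilter over `X`. -/
def IsComplete (δ : Cardinal.{0}) (X : Set Ordinal.{0})
    (U : Set (Set Ordinal.{0})) : Prop :=
  ∀ s : Set (Set Ordinal.{0}), s ⊆ U → MkLt s δ → X ∩ ⋂₀ s ∈ U

/-- Uniformity of an ultrafilter over `X`: all members have full cardinality. -/
def IsUniform (X : Set Ordinal.{0}) (U : Set (Set Ordinal.{0})) : Prop :=
  ∀ A ∈ U, Cardinal.mk A = Cardinal.mk X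

/-- Weak normality of an ultrafilter over a set of nonzero ordinals below `κ`. -/
def IsWeaklyNormal (κ : Ordinal.{0}) (X : Set Ordinal.{0})
    (U : Set (Set Ordinal.{0})) : Prop :=
  ∀ X' ∈ U, ∀ g : Ordinal.{0} → Ordinal.{0}, (∀ β ∈ X', g β < β) →
    ∃ γ < κ, {β ∈ X' | g β < γ} ∈ U

/-- A `□(κ,<ω)`-sequence. -/
def IsSquareSeqLtOmega (κ : Ordinal.{0})
    (𝒞 : Ordinal.{0} → Set (Set Ordinal.{0})) : Prop :=
  (∀ α, α < κ → Order.IsSuccLimit α →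
      (𝒞 α).Finite ∧ (𝒞 α).Nonempty ∧ ∀ C ∈ 𝒞 α, IsClubIn C α) ∧
  (∀ α, α < κ → Order.IsSuccLimit α → ∀ C ∈ 𝒞 α, ∀ β ∈ acc C, C ∩ Iio β ∈ 𝒞 β) ∧
  ¬ ∃ D : Set Ordinal.{0}, IsClubIn D κ ∧ ∀ α ∈ acc D, D ∩ Iio α ∈ 𝒞 α

/-- A weakly inaccessible cardinal: a regular limit cardinal. -/
def IsWInaccessible (c : Cardinal.{0}) : Prop :=
  c.IsRegular ∧ Order.IsSuccLimit c

/-- The Mahlo hierarchy (finite levels): `0`-Mahlo means weakly inaccessible, and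
`(n+1)`-Mahlo means regular with stationarily many `n`-Mahlo cardinals below. -/
def IsNMahlo : ℕ → Cardinal.{0} → Prop
  | 0 => fun c => IsWInaccessible c
  | (n + 1) => fun c => c.IsRegular ∧
      IsStationaryIn {α : Ordinal.{0} | ∃ μ : Cardinal.{0}, μ.ord = α ∧ IsNMahlo n μ} c.ord

/-- A set of ordinals is bounded below `α`. -/
def BoundedIn (s : Set Ordinal.{0}) (α : Ordinal.{0}) : Prop :=
  s = ∅ ∨ ∃ ε < α, ∀ η ∈ s, η ≤ ε

/-- The covering property for a coloring `c : [κ]² → θ`. -/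
def HasCoveringProperty (κ θ : Cardinal.{0})
    (c : Ordinal.{0} → Ordinal.{0} → Ordinal.{0}) : Prop :=
  ∀ α < κ.ord, ∃ f : Ordinal.{0} → Ordinal.{0},
    Set.InjOn f (Iio θ.ord) ∧
    (∀ i < θ.ord, α < f i ∧ f i < κ.ord ∧ Order.IsSuccLimit (f i) ∧ (f i).cof ≠ θ) ∧
    BoundedIn (Iio α \ ⋃ i ∈ Iio θ.ord, DleI c i (f i)) α

/-!
Let `κ = λ⁺` and let `A` be the set of `α < κ` lying in `C β` for `D`-almost every `β`.
By `δ`-completeness, any fewer than `δ` points of `A` lie in a common `C β`. To see that `A`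
is unbounded, apply weak normality to a choice of a point of `C β` above `ξ`: this gives
`F ξ < κ` such that `C β` meets `(ξ, F ξ)` for almost every `β`. For `γ < κ` the ordinal
`α = sup_n F^[n] γ` is still below `κ`, and by `ω₁`-completeness almost every `C β` meets each
interval `(F^[n] γ, F^[n+1] γ)` and lies above `α`; closedness of `C β` then puts `α` into
`C β`. Since `κ` is regular, the unbounded set `A` has size `κ`.
-/

open Cardinal

universe u

theorem lift_cof_le_mk_of_forall_exists_gt {s : Set Ordinal.{u}} {a : Ordinal.{u}}
    (hs : s ⊆ Iio a) (hunb : ∀ γ < a, ∃ α ∈ s, γ < α) :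
    Cardinal.lift.{u + 1} a.cof ≤ #s := by
  by_contra! h
  rw [Ordinal.lift_cof] at h
  obtain ⟨α, hα, hlt⟩ := hunb _ (Ordinal.sSup_lt_of_lt_cof h hs)
  exact (le_csSup ⟨a, fun x hx => (hs hx).le⟩ hα).not_gt hlt

theorem mkEq_of_forall_exists_gt {c : Cardinal.{0}} (hc : c.IsRegular) {s : Set Ordinal.{0}}
    (hs : s ⊆ Iio c.ord) (hunb : ∀ γ < c.ord, ∃ α ∈ s, γ < α) : MkEq s c := by
  refine le_antisymm ?_ ?_
  · calc #s ≤ #(Iio c.ord) := mk_le_mk_of_subset hs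
      _ = Cardinal.lift.{1} c := by rw [Cardinal.mk_Iio_ordinal, card_ord]
  · simpa [hc.cof_ord] using lift_cof_le_mk_of_forall_exists_gt hs hunb

theorem exists_mem_accOrd_gt {c : Cardinal.{0}} (hc : ℵ₀ < c) {γ : Ordinal.{0}}
    (hγ : γ < c.ord) : ∃ β ∈ accOrd c.ord, γ < β := by
  have hω : Ordinal.omega0 < c.ord := lt_ord.2 (by simpa using hc)
  exact ⟨γ + Ordinal.omega0,
    ⟨Ordinal.isPrincipal_add_ord hc.le hγ hω,
      Ordinal.isSuccLimit_add γ Ordinal.isSuccLimit_omega0⟩,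
    lt_add_of_pos_right γ Ordinal.omega0_pos⟩

theorem IsCSeq.exists_mem_gt {κ : Ordinal.{0}} {C : Ordinal.{0} → Set Ordinal.{0}}
    (hC : IsCSeq κ C) {β ξ : Ordinal.{0}} (hβ : β ∈ accOrd κ) (hξ : ξ < β) :
    ∃ x ∈ C β, ξ < x := by
  have hsup : sSup (C β) = β := (hC β hβ.1).2.2.trans hβ.2.sSup_Iio
  exact exists_lt_of_lt_csSup' (by rwa [hsup])

theorem IsClosedIn.mem_of_forall_nonempty {S : Set Ordinal.{0}} {β α : Ordinal.{0}}
    (hS : IsClosedIn S β) (hαβ : α < β) (hα : 0 < α)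
    (H : ∀ ξ < α, (S ∩ Ioo ξ α).Nonempty) : α ∈ S := by
  refine hS α hαβ hα <|
    le_antisymm (csSup_le' fun x hx => hx.2.le) (le_of_forall_lt fun ξ hξ => ?_)
  obtain ⟨x, hxS, hξx, hxα⟩ := H ξ hξ
  exact lt_csSup_of_lt ⟨α, fun y hy => hy.2.le⟩ ⟨hxS, hxα⟩ hξx

section Ultrafilter

variable {X : Set Ordinal.{0}} {U : Set (Set Ordinal.{0})}

theorem IsUltrafilterOn.nonempty_of_mem (hU : IsUltrafilterOn X U) {A : Set Ordinal.{0}}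
    (hA : A ∈ U) : A.Nonempty :=
  nonempty_iff_ne_empty.2 fun h => hU.empty_notMem (h ▸ hA)

theorem IsUltrafilterOn.mem_of_mk_diff_lt (hU : IsUltrafilterOn X U) (huni : IsUniform X U)
    {A : Set Ordinal.{0}} (hA : A ⊆ X) (h : #(X \ A : Set Ordinal.{0}) < #X) : A ∈ U :=
  (hU.mem_or_compl_mem A hA).resolve_right fun hc => h.ne (huni _ hc)

theorem IsComplete.iInter_nat_mem {δ : Cardinal.{0}} (h : IsComplete δ X U) (hδ : ℵ₀ < δ)
    {s : ℕ → Set Ordinal.{0}} (hs : ∀ n, s n ∈ U) : X ∩ ⋂ n, s n ∈ U := by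
  rw [← sInter_range]
  refine h _ (range_subset_iff.2 hs) ?_
  have hrange := mk_range_le_lift (f := s)
  rw [Cardinal.lift_id'.{0, 1}, mk_nat] at hrange
  exact hrange.trans_lt (by simpa using hδ)

end Ultrafilter

theorem tail_mem_of_isUniform {c : Cardinal.{0}} (hc : c.IsRegular) (hc₀ : ℵ₀ < c)
    {U : Set (Set Ordinal.{0})} (hU : IsUltrafilterOn (accOrd c.ord) U)
    (huni : IsUniform (accOrd c.ord) U) {γ : Ordinal.{0}} (hγ : γ < c.ord) :
    {β ∈ accOrd c.ord | γ < β} ∈ U := by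
  refine hU.mem_of_mk_diff_lt huni (fun β hβ => hβ.1) ?_
  have hsucc : (Order.succ γ).card < c := lt_ord.1 ((isSuccLimit_ord hc.aleph0_le).succ_lt hγ)
  calc #(accOrd c.ord \ {β ∈ accOrd c.ord | γ < β} : Set Ordinal.{0})
      ≤ #(Iio (Order.succ γ)) :=
        mk_le_mk_of_subset fun β hβ =>
          Order.lt_succ_iff.2 (not_lt.1 fun h => hβ.2 ⟨hβ.1, h⟩)
    _ = Cardinal.lift.{1} (Order.succ γ).card := Cardinal.mk_Iio_ordinal _
    _ < Cardinal.lift.{1} c := Cardinal.lift_lt.2 hsucc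
    _ = #(accOrd c.ord) :=
        (mkEq_of_forall_exists_gt hc (fun β hβ => hβ.1) fun _ => exists_mem_accOrd_gt hc₀).symm

def almostCommon (κ : Ordinal.{0}) (U : Set (Set Ordinal.{0}))
    (C : Ordinal.{0} → Set Ordinal.{0}) : Set Ordinal.{0} :=
  {α | α < κ ∧ {β ∈ accOrd κ | α ∈ C β} ∈ U}

section CSeqUltrafilter

variable {κ : Ordinal.{0}} {U : Set (Set Ordinal.{0})} {C : Ordinal.{0} → Set Ordinal.{0}}

theorem exists_subset_of_subset_almostCommon {δ : Cardinal.{0}}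
    (hU : IsUltrafilterOn (accOrd κ) U) (hcomp : IsComplete δ (accOrd κ) U)
    {B : Set Ordinal.{0}} (hB : B ⊆ almostCommon κ U C) (hBδ : MkLt B δ) :
    ∃ β < κ, B ⊆ C β := by
  let S : Ordinal.{0} → Set Ordinal.{0} := fun α => {β ∈ accOrd κ | α ∈ C β}
  have hmem := hcomp (S '' B) (image_subset_iff.2 fun α hα => (hB hα).2)
    (mk_image_le.trans_lt hBδ)
  obtain ⟨β, hβ, hβS⟩ := hU.nonempty_of_mem hmem
  exact ⟨β, hβ.1, fun α hα => (hβS _ (mem_image_of_mem S hα)).2⟩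

theorem exists_lt_mem_of_isWeaklyNormal (hU : IsUltrafilterOn (accOrd κ) U)
    (htail : ∀ γ < κ, {β ∈ accOrd κ | γ < β} ∈ U) (hwn : IsWeaklyNormal κ (accOrd κ) U)
    (hC : IsCSeq κ C) {ξ : Ordinal.{0}} (hξ : ξ < κ) :
    ∃ γ < κ, {β ∈ accOrd κ | (C β ∩ Ioo ξ γ).Nonempty} ∈ U := by
  choose! g hgC hξg using
    fun β (hβ : β ∈ {β ∈ accOrd κ | ξ < β}) => hC.exists_mem_gt hβ.1 hβ.2
  obtain ⟨γ, hγ, hmem⟩ := hwn _ (htail ξ hξ) g fun β hβ => (hC β hβ.1.1).1 (hgC β hβ)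
  refine ⟨γ, hγ, hU.mem_of_superset _ hmem _ (fun β hβ => hβ.1) ?_⟩
  rintro β ⟨hβ, hgγ⟩
  exact ⟨hβ.1, g β, hgC β hβ, hξg β hβ, hgγ⟩

theorem exists_gt_mem_almostCommon {δ : Cardinal.{0}} (hκ : ℵ₀ < κ.cof) (hδ : ℵ₀ < δ)
    (hU : IsUltrafilterOn (accOrd κ) U) (hcomp : IsComplete δ (accOrd κ) U)
    (htail : ∀ γ < κ, {β ∈ accOrd κ | γ < β} ∈ U) (hwn : IsWeaklyNormal κ (accOrd κ) U)
    (hC : IsCSeq κ C) {γ : Ordinal.{0}} (hγ : γ < κ) :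
    ∃ α ∈ almostCommon κ U C, γ < α := by
  choose! F hFκ hFU using fun ξ (hξ : ξ < κ) =>
    exists_lt_mem_of_isWeaklyNormal hU htail hwn hC hξ
  have hlt : ∀ ξ < κ, ξ < F ξ := fun ξ hξ => by
    obtain ⟨-, -, x, -, hξx, hxF⟩ := hU.nonempty_of_mem (hFU ξ hξ)
    exact hξx.trans hxF
  have hiter : ∀ n, F^[n] γ < κ := fun n => by
    induction n with
    | zero => exact hγ
    | succ n ih => rw [Function.iterate_succ_apply']; exact hFκ _ ih
  set α := Ordinal.nfp F γ
  have hγα : γ < α := (hlt γ hγ).trans_le (Ordinal.iterate_le_nfp F γ 1)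
  have hακ : α < κ := Ordinal.nfp_lt_ord hκ hFκ hγ
  refine ⟨α, ⟨hακ, ?_⟩, hγα⟩
  have hmem := hU.inter_mem _ (htail α hακ) _
    (hcomp.iInter_nat_mem hδ fun n => hFU _ (hiter n))
  refine hU.mem_of_superset _ hmem _ (fun β hβ => hβ.1) ?_
  rintro β ⟨⟨hβ, hαβ⟩, -, hβF⟩
  refine ⟨hβ, (hC β hβ.1).2.1.mem_of_forall_nonempty hαβ (pos_of_gt hγα) fun ξ hξ => ?_⟩
  obtain ⟨n, hn⟩ := Ordinal.lt_nfp_iff.1 hξ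
  obtain ⟨-, x, hxC, hx, hxF⟩ := mem_iInter.1 hβF n
  have hFα : F (F^[n] γ) ≤ α := by
    simpa only [Function.iterate_succ_apply'] using Ordinal.iterate_le_nfp F γ (n + 1)
  exact ⟨x, hxC, hn.trans hx, hxF.trans_le hFα⟩

end CSeqUltrafilter

theorem statement8_general
    (lam : Cardinal.{0}) (hlam : Cardinal.aleph0 < lam)
    (δ : Cardinal.{0}) (hδ : Cardinal.aleph0 < δ)
    (D : Set (Set Ordinal.{0}))
    (hD : IsUltrafilterOn (accOrd (Order.succ lam).ord) D)
    (hDcomplete : IsComplete δ (accOrd (Order.succ lam).ord) D)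
    (hDuniform : IsUniform (accOrd (Order.succ lam).ord) D)
    (hDweaklyNormal :
      IsWeaklyNormal (Order.succ lam).ord (accOrd (Order.succ lam).ord) D)
    (C : Ordinal.{0} → Set Ordinal.{0}) (hC : IsCSeq (Order.succ lam).ord C) :
    ∃ A : Set Ordinal.{0}, A ⊆ Iio (Order.succ lam).ord ∧
      MkEq A (Order.succ lam) ∧
      ∀ B ⊆ A, MkLt B δ → ∃ β < (Order.succ lam).ord, B ⊆ C β := by
  have hreg : (Order.succ lam).IsRegular := isRegular_succ hlam.le
  have hunc : ℵ₀ < Order.succ lam := hlam.trans (Order.lt_succ lam)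
  have htail : ∀ γ < (Order.succ lam).ord, {β ∈ accOrd (Order.succ lam).ord | γ < β} ∈ D :=
    fun _ hγ => tail_mem_of_isUniform hreg hunc hD hDuniform hγ
  have hunb :
      ∀ γ < (Order.succ lam).ord, ∃ α ∈ almostCommon (Order.succ lam).ord D C, γ < α :=
    fun _ hγ => exists_gt_mem_almostCommon (by rwa [hreg.cof_ord]) hδ hD hDcomplete htail
      hDweaklyNormal hC hγ
  exact ⟨almostCommon _ D C, fun α hα => hα.1,
    mkEq_of_forall_exists_gt hreg (fun α hα => hα.1) hunb,
    fun B hB hBδ => exists_subset_of_subset_almostCommon hD hDcomplete hB hBδ⟩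

theorem statement8
    (lam : Cardinal.{0}) (hlam : Cardinal.aleph0 < lam)
    (δ : Cardinal.{0}) (hδ : Cardinal.aleph0 < δ) (hδlam : δ < lam)
    (D : Set (Set Ordinal.{0}))
    (hD : IsUltrafilterOn (accOrd (Order.succ lam).ord) D)
    (hDcomplete : IsComplete δ (accOrd (Order.succ lam).ord) D)
    (hDuniform : IsUniform (accOrd (Order.succ lam).ord) D)
    (hDweaklyNormal :
      IsWeaklyNormal (Order.succ lam).ord (accOrd (Order.succ lam).ord) D)
    (C : Ordinal.{0} → Set Ordinal.{0}) (hC : IsCSeq (Order.succ lam).ord C) :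
    ∃ A : Set Ordinal.{0}, A ⊆ Iio (Order.succ lam).ord ∧
      MkEq A (Order.succ lam) ∧
      ∀ B ⊆ A, MkLt B δ → ∃ β < (Order.succ lam).ord, B ⊆ C β :=
  statement8_general lam hlam δ hδ D hD hDcomplete hDuniform hDweaklyNormal C hC

end CSeq
end
end

section
/- Let κ be a regular uncountable cardinal, let Γ ⊆ κ, let vec C = ⟨C_β : β ∈ Γ⟩ be a C-sequence over Γ, let D ⊆ κ be a club, and let ν be a cardinal such that Γ ∩ E^κ_{≥ν} is stationary. If (1) otp(C_β) < ν for all β ∈ Γ \ E^κ_{≥ν}, and (2) min(C_β) ≥ sup(D ∩ β) for all nonzero β ∈ Γ \ D, then χ(vec C) = χ(vec C ↾ (D ∩ E^κ_{≥ν})). -/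
/-!
Covers of `vec C ↾ Γ'`, where `Γ' = Γ ∩ D ∩ E^κ_{≥ν}`, are covers of `vec C`, so only the converse
needs an argument. If `κ ≤ χ⁺`, every `α < κ` has at most `χ` elements, and
`Δ = ⋃_{β ∈ Γ'} C_β` is covered pointwise. Otherwise fix a regular `μ` with `χ < μ < κ` and let
`X` be the set of common accumulation points of `Δ` and `D` of cofinality `≥ μ, ν`; it is
unbounded in `κ` (by stationarity if `μ ≤ ν`, by a `μ`-sequence otherwise). Split `X` into `μ`
disjoint pieces of size `κ`: since `|b(a)| = χ < μ`, some piece `P` is missed by `b(a)` for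
cofinally many `a`. For `δ ∈ P` below such an `a`, because `cf δ > χ` a single `C_β`,
`β ∈ b(a)`, is cofinal in `δ`, so `δ ∈ C_β` and `δ < β`; hypothesis (2) then puts `β` in `D`,
and (1) gives `cf β ≥ ν`. So `P` together with `b(a) ∩ Γ'` witnesses `χ` for `vec C ↾ Γ'`.
-/
noncomputable section

open Set

namespace CSeq

universe u

open Cardinal Function

def IsUnboundedIn (A : Set Ordinal.{0}) (κ : Ordinal.{0}) : Prop :=
  ∀ ζ < κ, ∃ x ∈ A, ζ < x ∧ x < κ

def IsAccPt (A : Set Ordinal.{0}) (δ : Ordinal.{0}) : Prop :=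
  0 < δ ∧ sSup (A ∩ Iio δ) = δ

theorem bddAbove_inter_Iio (A : Set Ordinal.{0}) (δ : Ordinal.{0}) : BddAbove (A ∩ Iio δ) :=
  ⟨δ, fun _ hx => hx.2.le⟩

theorem sSup_inter_Iio_le (A : Set Ordinal.{0}) (δ : Ordinal.{0}) : sSup (A ∩ Iio δ) ≤ δ :=
  csSup_le' fun _ hx => hx.2.le

theorem isAccPt_iff {A : Set Ordinal.{0}} {δ : Ordinal.{0}} :
    IsAccPt A δ ↔ 0 < δ ∧ ∀ x < δ, ∃ y ∈ A, x < y ∧ y < δ := by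
  refine and_congr_right fun _ => ⟨fun h x hx => ?_, fun h => ?_⟩
  · obtain ⟨y, hy, hxy⟩ := exists_lt_of_lt_csSup' (h.symm ▸ hx)
    exact ⟨y, hy.1, hxy, hy.2⟩
  · refine (sSup_inter_Iio_le A δ).antisymm (le_of_forall_lt fun x hx => ?_)
    obtain ⟨y, hyA, hxy, hyδ⟩ := h x hx
    exact lt_csSup_of_lt (bddAbove_inter_Iio A δ) ⟨hyA, hyδ⟩ hxy

theorem sSup_lt_of_mk_lt_cof {s : Set Ordinal.{0}} {δ : Ordinal.{0}}
    (hs : ∀ x ∈ s, x < δ) (hmk : #s < lift.{1} δ.cof) : sSup s < δ :=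
  Ordinal.sSup_lt_of_lt_cof (by rwa [← Ordinal.lift_cof]) hs

theorem lift_cof_le_mk_of_isAccPt {A : Set Ordinal.{0}} {δ : Ordinal.{0}} (h : IsAccPt A δ) :
    lift.{1} δ.cof ≤ #A := by
  by_contra! hlt
  have := sSup_lt_of_mk_lt_cof (fun _ hx => hx.2)
    ((mk_le_mk_of_subset inter_subset_left).trans_lt hlt)
  exact this.ne h.2

theorem mk_eq_of_isUnboundedIn {κ : Cardinal.{0}} (hκ : κ.IsRegular) {A : Set Ordinal.{0}}
    (hsub : A ⊆ Iio κ.ord) (hA : IsUnboundedIn A κ.ord) : #A = lift.{1} κ := by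
  refine le_antisymm ?_ (not_lt.1 fun hlt => ?_)
  · simpa using mk_le_mk_of_subset hsub
  · obtain ⟨x, hxA, hx, -⟩ :=
      hA _ (sSup_lt_of_mk_lt_cof (fun _ hx => hsub hx) (by rwa [hκ.cof_ord]))
    exact hx.not_ge (le_csSup ⟨κ.ord, fun _ hy => (hsub hy).le⟩ hxA)

theorem isUnboundedIn_of_mk_eq {κ : Cardinal.{0}} (hκ : ℵ₀ ≤ κ) {A : Set Ordinal.{0}}
    (hsub : A ⊆ Iio κ.ord) (hA : #A = lift.{1} κ) : IsUnboundedIn A κ.ord := by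
  intro ζ hζ
  suffices ∃ x ∈ A, ζ < x from this.imp fun x hx => ⟨hx.1, hx.2, hsub hx.1⟩
  by_contra! hle
  have hsub : A ⊆ Iio (Order.succ ζ) := fun x hx => Order.lt_succ_iff.2 (hle x hx)
  have hsmall : #(Iio (Order.succ ζ)) < lift.{1} κ := by
    rw [mk_Iio_ordinal, lift_lt, ← lt_ord]
    exact (isSuccLimit_ord hκ).succ_lt hζ
  exact ((mk_le_mk_of_subset hsub).trans_lt hsmall).ne hA

theorem exists_cof_eq_forall_exists_le_map_le {κ : Ordinal.{0}} {μ : Cardinal.{0}}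
    (hμ : μ.IsRegular) (hμκ : μ < κ.cof) (g : Ordinal.{0} → Ordinal.{0}) (hg : ∀ x, x < g x)
    (hgκ : ∀ x < κ, g x < κ) {ζ : Ordinal.{0}} (hζ : ζ < κ) :
    ∃ δ, ζ < δ ∧ δ < κ ∧ δ.cof = μ ∧ ∀ x < δ, ∃ y, x ≤ y ∧ g y ≤ δ := by
  let F : Ordinal.{0} → Ordinal.{0} :=
    Ordinal.lt_wf.fix fun ξ F => g (max ζ (⨆ η : Iio ξ, F η η.2))
  have hF (ξ : Ordinal.{0}) : F ξ = g (max ζ (⨆ η : Iio ξ, F η)) := Ordinal.lt_wf.fix_eq _ ξ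
  have hle_iSup {ξ η : Ordinal.{0}} (h : η < ξ) : F η ≤ ⨆ η : Iio ξ, F η :=
    le_ciSup (f := fun η : Iio ξ => F η) Ordinal.bddAbove_of_small ⟨η, h⟩
  have hmono : StrictMono F := fun η ξ h =>
    calc F η ≤ max ζ (⨆ η : Iio ξ, F η) := (hle_iSup h).trans (le_max_right _ _)
      _ < F ξ := hF ξ ▸ hg _
  have hsmall {ξ : Ordinal.{0}} (hξ : ξ.card < κ.cof) :
      lift.{0} #(Iio ξ) < (Ordinal.lift.{1} κ).cof := by
    rwa [← Ordinal.lift_cof, mk_Iio_ordinal, lift_uzero, lift_lt]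
  have hlt (ξ : Ordinal.{0}) : ξ < μ.ord → F ξ < κ := by
    induction ξ using WellFoundedLT.induction with
    | _ ξ ih =>
      intro hξ
      rw [hF]
      refine hgκ _ (max_lt hζ (Ordinal.lift_iSup_lt_of_lt_cof ?_ fun η => ih η η.2 (η.2.trans hξ)))
      exact hsmall ((lt_ord.1 hξ).trans hμκ)
  have hlim : Order.IsSuccLimit μ.ord := isSuccLimit_ord hμ.aleph0_le
  set δ := ⨆ ξ : Iio μ.ord, F ξ
  have hFle {ξ : Ordinal.{0}} (hξ : ξ < μ.ord) : F ξ ≤ δ := hle_iSup hξ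
  refine ⟨δ, ?_, ?_, ?_, fun x hx => ?_⟩
  · refine lt_of_lt_of_le ?_ (hFle hlim.bot_lt)
    rw [hF]
    exact (le_max_left _ _).trans_lt (hg _)
  · exact Ordinal.lift_iSup_lt_of_lt_cof (hsmall (by rwa [card_ord])) fun ξ => hlt ξ ξ.2
  · rw [← hμ.cof_ord]
    exact Ordinal.cof_iSup_Iio (hmono.comp (Subtype.strictMono_coe _)) hlim.isSuccPrelimit
  · obtain ⟨ξ, hξ⟩ := Ordinal.lt_iSup_iff.1 hx
    refine ⟨max ζ (⨆ η : Iio (Order.succ ξ.1), F η), ?_, ?_⟩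
    · exact hξ.le.trans ((hle_iSup (Order.lt_succ ξ.1)).trans (le_max_right _ _))
    · rw [← hF]
      exact hFle (hlim.succ_lt ξ.2)

theorem exists_isAccPt_isAccPt_cof_eq {κ : Ordinal.{0}} {μ : Cardinal.{0}} (hμ : μ.IsRegular)
    (hμκ : μ < κ.cof) {U V : Set Ordinal.{0}} (hU : IsUnboundedIn U κ) (hV : IsUnboundedIn V κ)
    {ζ : Ordinal.{0}} (hζ : ζ < κ) :
    ∃ δ, ζ < δ ∧ δ < κ ∧ δ.cof = μ ∧ IsAccPt U δ ∧ IsAccPt V δ := by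
  have hκ : Order.IsSuccLimit κ := Ordinal.one_lt_cof_iff.1 <|
    (one_lt_aleph0.trans_le hμ.aleph0_le).trans hμκ
  have hstep (x : Ordinal.{0}) (hx : x < κ) : ∃ z, x < z ∧ z < κ ∧
      (∃ u ∈ U, x < u ∧ u < z) ∧ (∃ v ∈ V, x < v ∧ v < z) := by
    obtain ⟨u, huU, hxu, huκ⟩ := hU x hx
    obtain ⟨v, hvV, huv, hvκ⟩ := hV u huκ
    exact ⟨Order.succ v, (hxu.trans huv).trans (Order.lt_succ v), hκ.succ_lt hvκ,
      ⟨u, huU, hxu, huv.trans (Order.lt_succ v)⟩, ⟨v, hvV, hxu.trans huv, Order.lt_succ v⟩⟩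
  choose z hxz hzκ hzU hzV using hstep
  let g : Ordinal.{0} → Ordinal.{0} := fun x => if hx : x < κ then z x hx else Order.succ x
  have hg (x : Ordinal.{0}) : x < g x := by
    unfold g; split_ifs with hx
    exacts [hxz x hx, Order.lt_succ x]
  have hgκ (x : Ordinal.{0}) (hx : x < κ) : g x < κ := by simpa [g, hx] using hzκ x hx
  obtain ⟨δ, hζδ, hδκ, hδcof, hδ⟩ := exists_cof_eq_forall_exists_le_map_le hμ hμκ g hg hgκ hζ
  have hbetween {W : Set Ordinal.{0}} (hW : ∀ x (hx : x < κ), ∃ w ∈ W, x < w ∧ w < z x hx) :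
      IsAccPt W δ := by
    refine isAccPt_iff.2 ⟨hζδ.pos, fun x hx => ?_⟩
    obtain ⟨y, hxy, hyδ⟩ := hδ x hx
    have hyκ : y < κ := ((hg y).trans_le hyδ).trans hδκ
    obtain ⟨w, hwW, hyw, hwz⟩ := hW y hyκ
    have hgy : g y = z y hyκ := dif_pos hyκ
    exact ⟨w, hwW, hxy.trans_lt hyw, hwz.trans_le (hgy ▸ hyδ)⟩
  exact ⟨δ, hζδ, hδκ, hδcof, hbetween hzU, hbetween hzV⟩

theorem IsAccPt.of_forall_isAccPt {E U : Set Ordinal.{0}} {δ : Ordinal.{0}} (hE : IsAccPt E δ)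
    (hEU : ∀ x ∈ E, IsAccPt U x) : IsAccPt U δ := by
  refine isAccPt_iff.2 ⟨hE.1, fun x hx => ?_⟩
  obtain ⟨y, hyE, hxy, hyδ⟩ := (isAccPt_iff.1 hE).2 x hx
  obtain ⟨w, hwU, hxw, hwy⟩ := (isAccPt_iff.1 (hEU y hyE)).2 x hxy
  exact ⟨w, hwU, hxw, hwy.trans hyδ⟩

theorem isClubIn_setOf_isAccPt {κ : Ordinal.{0}} (hκ : ℵ₀ < κ.cof) {U V : Set Ordinal.{0}}
    (hU : IsUnboundedIn U κ) (hV : IsUnboundedIn V κ) {ζ : Ordinal.{0}} (hζ : ζ < κ) :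
    IsClubIn {x | ζ < x ∧ x < κ ∧ IsAccPt U x ∧ IsAccPt V x} κ := by
  refine ⟨fun x hx => hx.2.1, fun α hα => ?_, fun α _ hα0 hα => ?_⟩
  · obtain ⟨δ, hδ, hδκ, -, hUδ, hVδ⟩ :=
      exists_isAccPt_isAccPt_cof_eq isRegular_aleph0 hκ hU hV (max_lt hα hζ)
    exact ⟨δ, ⟨(le_max_right _ _).trans_lt hδ, hδκ, hUδ, hVδ⟩, (le_max_left _ _).trans hδ.le⟩
  · have hE : IsAccPt {x | ζ < x ∧ x < κ ∧ IsAccPt U x ∧ IsAccPt V x} α := ⟨hα0, hα⟩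
    obtain ⟨y, hy, -, hyα⟩ := (isAccPt_iff.1 hE).2 0 hα0
    refine ⟨hy.1.trans hyα, ‹α < κ›, ?_, ?_⟩
    exacts [hE.of_forall_isAccPt fun x hx => hx.2.2.1, hE.of_forall_isAccPt fun x hx => hx.2.2.2]

theorem exists_isAccPt_isAccPt_le_cof {κ : Cardinal.{0}} (hκ : κ.IsRegular)
    {μ ν : Cardinal.{0}} (hμ : μ.IsRegular) (hμκ : μ < κ)
    (hstat : IsStationaryIn {α | α < κ.ord ∧ ν ≤ α.cof} κ.ord) {U V : Set Ordinal.{0}}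
    (hU : IsUnboundedIn U κ.ord) (hV : IsUnboundedIn V κ.ord) {ζ : Ordinal.{0}}
    (hζ : ζ < κ.ord) :
    ∃ δ, ζ < δ ∧ δ < κ.ord ∧ IsAccPt U δ ∧ IsAccPt V δ ∧ μ ≤ δ.cof ∧ ν ≤ δ.cof := by
  rw [← hκ.cof_ord] at hμκ
  rcases le_or_gt μ ν with hμν | hνμ
  · obtain ⟨δ, hδν, hζδ, hδκ, hUδ, hVδ⟩ :=
      hstat _ (isClubIn_setOf_isAccPt (hμ.aleph0_le.trans_lt hμκ) hU hV hζ)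
    exact ⟨δ, hζδ, hδκ, hUδ, hVδ, hμν.trans hδν.2, hδν.2⟩
  · obtain ⟨δ, hζδ, hδκ, hδcof, hUδ, hVδ⟩ := exists_isAccPt_isAccPt_cof_eq hμ hμκ hU hV hζ
    exact ⟨δ, hζδ, hδκ, hUδ, hVδ, hδcof.ge, hδcof ▸ hνμ.le⟩

theorem exists_superset_subset_mk_eq {α : Type*} {s G : Set α} {c : Cardinal} (hsG : s ⊆ G)
    (hs : #s ≤ c) (hc : c ≤ #(G \ s : Set α)) : ∃ t, s ⊆ t ∧ t ⊆ G ∧ #t = c := by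
  obtain ⟨u, huG, rfl⟩ := le_mk_iff_exists_subset.1 hc
  obtain ⟨f⟩ := hs
  -- replace a copy of `s` inside `u` by `s` itself; this also works for finite `c`
  have hfu : range (Subtype.val ∘ f) ⊆ u := by
    rintro _ ⟨x, rfl⟩
    exact (f x).2
  have hdisj : Disjoint s (u \ range (Subtype.val ∘ f)) :=
    disjoint_left.2 fun x hxs hxu => (huG hxu.1).2 hxs
  refine ⟨s ∪ (u \ range (Subtype.val ∘ f)), subset_union_left,
    union_subset hsG fun x hx => (huG hx.1).1, ?_⟩
  rw [mk_union_of_disjoint hdisj, ← mk_sdiff_add_mk hfu, add_comm,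
    mk_range_eq _ (Subtype.val_injective.comp f.injective)]

theorem exists_pairwise_disjoint_mk_eq {α ι : Type u} [Nonempty ι] {X : Set α}
    (hX : ℵ₀ ≤ #X) (hι : #ι ≤ #X) :
    ∃ P : ι → Set α, Pairwise (Disjoint on P) ∧ ∀ i, P i ⊆ X ∧ #(P i) = #X := by
  have hprod : #(ι × X) = #X := by
    rw [mk_prod, lift_id, lift_id, Cardinal.mul_eq_right hX hι (mk_ne_zero ι)]
  obtain ⟨e⟩ := Cardinal.eq.1 hprod
  refine ⟨fun i => range fun x => (e (i, x) : α), fun i j hij => ?_, fun i => ⟨?_, ?_⟩⟩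
  · refine disjoint_left.2 ?_
    rintro _ ⟨x, rfl⟩ ⟨y, hy⟩
    exact hij (congrArg Prod.fst (e.injective (Subtype.ext hy))).symm
  · rintro _ ⟨x, rfl⟩
    exact (e (i, x)).2
  · refine mk_range_eq _ fun x y hxy => ?_
    simpa using e.injective (Subtype.ext hxy)

theorem exists_forall_exists_disjoint {α ι : Type u} {P : ι → Set α}
    (hP : Pairwise (Disjoint on P)) {κ : Ordinal.{0}} (hι : lift.{0} #ι < lift.{u} κ.cof)
    (b : Ordinal.{0} → Set α) (hb : ∀ a < κ, #(b a) < #ι) :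
    ∃ i, ∀ ζ < κ, ∃ a, ζ < a ∧ a < κ ∧ Disjoint (b a) (P i) := by
  by_contra! h
  choose Z hZκ hZ using h
  set a := ⨆ i, Z i + 1
  have ha : a < κ := Ordinal.lift_iSup_add_one_lt_of_lt_cof (by rwa [← Ordinal.lift_cof]) hZκ
  have hlt (i : ι) : Z i < a := by
    refine (Order.lt_succ (Z i)).trans_le (le_ciSup (f := fun i => Z i + 1) ⟨κ, ?_⟩ i)
    rintro _ ⟨j, rfl⟩
    exact Order.succ_le_of_lt (hZκ j)
  choose f hfb hfP using fun i => not_disjoint_iff.1 (hZ i a (hlt i) ha)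
  have hinj : Injective fun i => (⟨f i, hfb i⟩ : b a) := by
    intro i j hij
    by_contra hne
    have hfij : f i = f j := congrArg Subtype.val hij
    exact disjoint_left.1 (hP hne) (hfP i) (hfij ▸ hfP j)
  exact (hb a ha).not_ge (mk_le_of_injective hinj)

theorem IsAccPt.mono {E U : Set Ordinal.{0}} {δ : Ordinal.{0}} (h : IsAccPt E δ) (hEU : E ⊆ U) :
    IsAccPt U δ :=
  isAccPt_iff.2 ⟨h.1, fun x hx => ((isAccPt_iff.1 h).2 x hx).imp fun _ hy => ⟨hEU hy.1, hy.2⟩⟩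

theorem IsClubIn.isUnboundedIn {D : Set Ordinal.{0}} {κ : Ordinal.{0}}
    (hκ : Order.IsSuccLimit κ) (hD : IsClubIn D κ) : IsUnboundedIn D κ := fun _ hζ =>
  (hD.2.1 _ (hκ.succ_lt hζ)).imp fun _ hγ => ⟨hγ.1, Order.succ_le_iff.1 hγ.2, hD.1 hγ.1⟩

theorem IsClubIn.inter_Ioi {D : Set Ordinal.{0}} {κ : Ordinal.{0}} (hκ : Order.IsSuccLimit κ)
    (hD : IsClubIn D κ) {ζ : Ordinal.{0}} (hζ : ζ < κ) : IsClubIn (D ∩ Ioi ζ) κ := by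
  refine ⟨fun x hx => hD.1 hx.1, fun α hα => ?_, fun α hα hα0 hsup => ?_⟩
  · obtain ⟨γ, hγD, hζγ, -⟩ := hD.isUnboundedIn hκ _ (max_lt hα hζ)
    exact ⟨γ, ⟨hγD, (le_max_right _ _).trans_lt hζγ⟩, (le_max_left _ _).trans hζγ.le⟩
  · have hacc : IsAccPt (D ∩ Ioi ζ) α := ⟨hα0, hsup⟩
    obtain ⟨y, hy, -, hyα⟩ := (isAccPt_iff.1 hacc).2 0 hα0
    exact ⟨hD.2.2 α hα hα0 (hacc.mono inter_subset_left).2, mem_Ioi.2 (hy.2.trans hyα)⟩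

theorem IsStationaryIn.isUnboundedIn_inter {S D : Set Ordinal.{0}} {κ : Ordinal.{0}}
    (hS : IsStationaryIn S κ) (hκ : Order.IsSuccLimit κ) (hD : IsClubIn D κ) :
    IsUnboundedIn (S ∩ D) κ := by
  intro ζ hζ
  obtain ⟨x, hxS, hxD, hζx⟩ := hS _ (hD.inter_Ioi hκ hζ)
  exact ⟨x, ⟨hxS, hxD⟩, hζx, hD.1 hxD⟩

theorem exists_isAccPt_of_subset_biUnion {Δ B : Set Ordinal.{0}}
    {C : Ordinal.{0} → Set Ordinal.{0}} {δ : Ordinal.{0}} (hΔ : IsAccPt Δ δ)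
    (hcov : Δ ∩ Iio δ ⊆ ⋃ β ∈ B, C β) (hB : #B < lift.{1} δ.cof) :
    ∃ β ∈ B, IsAccPt (C β) δ := by
  by_contra! h
  have hlt : ∀ β ∈ B, sSup (C β ∩ Iio δ) < δ := fun β hβ =>
    (sSup_inter_Iio_le _ _).lt_of_ne fun he => h β hβ ⟨hΔ.1, he⟩
  have hsup : sSup ((fun β => sSup (C β ∩ Iio δ)) '' B) < δ :=
    sSup_lt_of_mk_lt_cof (forall_mem_image.2 hlt) (mk_image_le.trans_lt hB)
  obtain ⟨y, hyΔ, hy, hyδ⟩ := (isAccPt_iff.1 hΔ).2 _ hsup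
  obtain ⟨β, hβ, hyC⟩ := mem_iUnion₂.1 (hcov ⟨hyΔ, hyδ⟩)
  refine hy.not_ge ((le_csSup (bddAbove_inter_Iio _ δ) ⟨hyC, hyδ⟩).trans ?_)
  exact le_csSup ⟨δ, forall_mem_image.2 fun β hβ => (hlt β hβ).le⟩ (mem_image_of_mem _ hβ)

theorem IsCSeqOn.lt_and_mem_of_isAccPt {Γ : Set Ordinal.{0}} {C : Ordinal.{0} → Set Ordinal.{0}}
    (hC : IsCSeqOn Γ C) {β δ : Ordinal.{0}} (hβ : β ∈ Γ) (hδ : IsAccPt (C β) δ) (hδβ : δ ≠ β) :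
    δ < β ∧ δ ∈ C β := by
  have hlt : δ < β := by
    refine lt_of_le_of_ne (not_lt.1 fun hβδ => ?_) hδβ
    have : sSup (C β ∩ Iio δ) ≤ β := csSup_le' fun x hx => ((hC β hβ).1 hx.1).le
    exact (hδ.2 ▸ this).not_gt hβδ
  exact ⟨hlt, (hC β hβ).2.1 δ hlt hδ.1 hδ.2⟩

theorem mk_lt_of_otp_lt {s : Set Ordinal.{0}} {ν : Cardinal.{0}}
    (h : otp s < Ordinal.lift.{1} ν.ord) : #s < lift.{1} ν := by
  rwa [lift_ord, lt_ord, otp, Ordinal.card_type] at h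

theorem CSeqCovers.mono {κ χ : Cardinal.{0}} {Γ Γ' : Set Ordinal.{0}}
    {C : Ordinal.{0} → Set Ordinal.{0}} (h : CSeqCovers κ Γ C χ) (hΓ : Γ ⊆ Γ') :
    CSeqCovers κ Γ' C χ :=
  let ⟨Δ, b, hΔ, hΔmk, hb, hcov⟩ := h
  ⟨Δ, b, hΔ, hΔmk, fun α hα => ⟨(hb α hα).1.trans hΓ, (hb α hα).2⟩, hcov⟩

theorem cseqCovers_of_forall_exists {κ χ : Cardinal.{0}} (hκ : ℵ₀ ≤ κ) (hχκ : χ ≤ κ)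
    {Γ : Set Ordinal.{0}} (hΓ : #Γ = lift.{1} κ) {C : Ordinal.{0} → Set Ordinal.{0}}
    {Δ : Set Ordinal.{0}} (hΔ : Δ ⊆ Iio κ.ord) (hΔmk : MkEq Δ κ)
    (h : ∀ α < κ.ord, ∃ s ⊆ Γ, #s ≤ lift.{1} χ ∧ #s < lift.{1} κ ∧ Δ ∩ Iio α ⊆ ⋃ β ∈ s, C β) :
    CSeqCovers κ Γ C χ := by
  have ht (α : Ordinal.{0}) : ∃ t, α < κ.ord →
      t ⊆ Γ ∧ MkEq t χ ∧ Δ ∩ Iio α ⊆ ⋃ β ∈ t, C β := by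
    by_cases hα : α < κ.ord
    swap
    · exact ⟨∅, fun h => absurd h hα⟩
    obtain ⟨s, hsΓ, hsχ, hsκ, hcov⟩ := h α hα
    have hroom : lift.{1} χ ≤ #(Γ \ s : Set Ordinal.{0}) := by
      by_contra! hlt
      refine (mk_sdiff_add_mk hsΓ ▸ hΓ).not_lt ?_
      exact add_lt_of_lt (aleph0_le_lift.2 hκ) (hlt.trans_le (lift_le.2 hχκ)) hsκ
    obtain ⟨t, hst, htΓ, htχ⟩ := exists_superset_subset_mk_eq hsΓ hsχ hroom
    exact ⟨t, fun _ => ⟨htΓ, htχ, hcov.trans (biUnion_subset_biUnion_left hst)⟩⟩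
  choose b hb using ht
  exact ⟨Δ, b, hΔ, hΔmk, fun α hα => ⟨(hb α hα).1, (hb α hα).2.1⟩, fun α hα => (hb α hα).2.2⟩

theorem cseqCovers_of_le_succ {κ χ : Cardinal.{0}} (hκ : κ.IsRegular) (hχκ : χ ≤ κ)
    (hκχ : κ ≤ Order.succ χ) {Γ : Set Ordinal.{0}} (hΓ : Γ ⊆ Iio κ.ord)
    (hΓub : IsUnboundedIn Γ κ.ord) {C : Ordinal.{0} → Set Ordinal.{0}} (hC : IsCSeqOn Γ C) :
    CSeqCovers κ Γ C χ := by
  have hΔ : (⋃ β ∈ Γ, C β) ⊆ Iio κ.ord := iUnion₂_subset fun β hβ x hx =>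
    mem_Iio.2 (((hC β hβ).1 hx).out.trans (hΓ hβ))
  have hΔub : IsUnboundedIn (⋃ β ∈ Γ, C β) κ.ord := by
    intro ζ hζ
    obtain ⟨β, hβΓ, hζβ, -⟩ := hΓub _ ((isSuccLimit_ord hκ.aleph0_le).succ_lt hζ)
    have : ζ < sSup (C β) := by
      rw [(hC β hβΓ).2.2]
      exact (Order.lt_succ ζ).trans_le (le_csSup bddAbove_Iio hζβ)
    obtain ⟨x, hxC, hζx⟩ := exists_lt_of_lt_csSup' this
    exact ⟨x, mem_biUnion hβΓ hxC, hζx, hΔ (mem_biUnion hβΓ hxC)⟩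
  refine cseqCovers_of_forall_exists hκ.aleph0_le hχκ (mk_eq_of_isUnboundedIn hκ hΓ hΓub) hΔ
    (mk_eq_of_isUnboundedIn hκ hΔ hΔub) fun α hα => ?_
  have hsel (x : ((⋃ β ∈ Γ, C β) ∩ Iio α : Set Ordinal.{0})) : ∃ β ∈ Γ, x.1 ∈ C β := by
    simpa using x.2.1
  choose f hfΓ hfC using hsel
  have hmk : #(range f) ≤ lift.{1} α.card :=
    mk_range_le.trans ((mk_le_mk_of_subset inter_subset_right).trans (mk_Iio_ordinal α).le)
  refine ⟨range f, range_subset_iff.2 hfΓ, hmk.trans (lift_le.2 ?_),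
    hmk.trans_lt (lift_lt.2 (lt_ord.1 hα)), fun x hx => mem_biUnion ⟨⟨x, hx⟩, rfl⟩ (hfC ⟨x, hx⟩)⟩
  exact Order.lt_succ_iff.1 ((lt_ord.1 hα).trans_le hκχ)

theorem exists_isRegular_gt_lt {χ κ : Cardinal.{0}} (hχκ : Order.succ χ < κ) (hκ : ℵ₀ < κ) :
    ∃ μ : Cardinal.{0}, μ.IsRegular ∧ χ < μ ∧ μ < κ := by
  rcases le_or_gt ℵ₀ χ with hχ | hχ
  exacts [⟨_, isRegular_succ hχ, Order.lt_succ χ, hχκ⟩, ⟨ℵ₀, isRegular_aleph0, hχ, hκ⟩]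

theorem cseqCovers_of_succ_lt {κ χ ν : Cardinal.{0}} (hκ : κ.IsRegular) (hκunc : ℵ₀ < κ)
    (hχκ : Order.succ χ < κ) {Γ Γ' D : Set Ordinal.{0}} {C : Ordinal.{0} → Set Ordinal.{0}}
    (hΓ'mk : #Γ' = lift.{1} κ) (hD : IsClubIn D κ.ord)
    (hstat : IsStationaryIn {α | α < κ.ord ∧ ν ≤ α.cof} κ.ord)
    (hmem : ∀ β ∈ Γ, ∀ δ, IsAccPt (C β) δ → δ ≠ β → δ ∈ D → ν ≤ δ.cof → β ∈ Γ' ∧ δ ∈ C β)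
    (hcov : CSeqCovers κ Γ C χ) : CSeqCovers κ Γ' C χ := by
  obtain ⟨Δ, b, hΔ, hΔmk, hb, hbcov⟩ := hcov
  obtain ⟨μ, hμ, hχμ, hμκ⟩ := exists_isRegular_gt_lt hχκ hκunc
  have hχκ' : χ < κ := (Order.lt_succ χ).trans hχκ
  have hκlim : Order.IsSuccLimit κ.ord := isSuccLimit_ord hκ.aleph0_le
  set X := {δ | δ < κ.ord ∧ IsAccPt Δ δ ∧ IsAccPt D δ ∧ μ ≤ δ.cof ∧ ν ≤ δ.cof}
  have hXub : IsUnboundedIn X κ.ord := fun ζ hζ => by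
    obtain ⟨δ, hζδ, hδκ, hΔδ, hDδ, hμδ, hνδ⟩ := exists_isAccPt_isAccPt_le_cof hκ hμ hμκ hstat
      (isUnboundedIn_of_mk_eq hκ.aleph0_le hΔ hΔmk) (hD.isUnboundedIn hκlim) hζ
    exact ⟨δ, ⟨hδκ, hΔδ, hDδ, hμδ, hνδ⟩, hζδ, hδκ⟩
  have hXmk : #X = lift.{1} κ := mk_eq_of_isUnboundedIn hκ (fun _ hx => hx.1) hXub
  let ι := ULift.{1} μ.out
  have hι : #ι = lift.{1} μ := by rw [mk_uLift, mk_out]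
  have : Nonempty μ.out := mk_ne_zero_iff.1 (by rw [mk_out]; exact hμ.pos.ne')
  obtain ⟨P, hPdisj, hPX⟩ := exists_pairwise_disjoint_mk_eq (ι := ι)
    (hXmk ▸ aleph0_le_lift.2 hκ.aleph0_le) (hι ▸ hXmk ▸ lift_le.2 hμκ.le)
  obtain ⟨i, hi⟩ := exists_forall_exists_disjoint hPdisj (κ := κ.ord)
    (by rwa [hι, lift_uzero, hκ.cof_ord, lift_lt]) b
    fun a ha => (hb a ha).2.trans_lt (hι ▸ lift_lt.2 hχμ)
  refine cseqCovers_of_forall_exists hκ.aleph0_le hχκ'.le hΓ'mk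
    (fun _ hx => ((hPX i).1 hx).1) ((hPX i).2.trans hXmk) fun α hα => ?_
  obtain ⟨a, hαa, haκ, hdisj⟩ := hi α hα
  have hba : #(b a ∩ Γ' : Set Ordinal.{0}) ≤ lift.{1} χ :=
    (mk_le_mk_of_subset inter_subset_left).trans (hb a haκ).2.le
  refine ⟨b a ∩ Γ', inter_subset_right, hba, hba.trans_lt (lift_lt.2 hχκ'),
    fun δ ⟨hδP, hδα⟩ => ?_⟩
  obtain ⟨hδκ, hΔδ, hDδ, hμδ, hνδ⟩ := (hPX i).1 hδP
  obtain ⟨β, hβb, hβδ⟩ := exists_isAccPt_of_subset_biUnion hΔδ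
    (fun x hx => hbcov a haκ ⟨hx.1, hx.2.trans (hδα.trans hαa)⟩)
    ((hb a haκ).2.trans_lt (lift_lt.2 (hχμ.trans_le hμδ)))
  have hδβ : δ ≠ β := fun h => disjoint_left.1 hdisj hβb (h ▸ hδP)
  obtain ⟨hβΓ', hδC⟩ :=
    hmem β ((hb a haκ).1 hβb) δ hβδ hδβ (hD.2.2 δ hδκ hDδ.1 hDδ.2) hνδ
  exact mem_biUnion ⟨hβb, hβΓ'⟩ hδC

theorem mem_restrict_of_isAccPt {κ ν : Cardinal.{0}} {Γ D : Set Ordinal.{0}}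
    {C : Ordinal.{0} → Set Ordinal.{0}} (hΓ : Γ ⊆ Iio κ.ord) (hC : IsCSeqOn Γ C)
    (h1 : ∀ β ∈ Γ, β.cof < ν → otp (C β) < Ordinal.lift.{1} ν.ord)
    (h2 : ∀ β ∈ Γ, β ∉ D → 0 < β → sSup (D ∩ Iio β) ≤ sInf (C β))
    {β : Ordinal.{0}} (hβ : β ∈ Γ) {δ : Ordinal.{0}} (hδ : IsAccPt (C β) δ) (hδβ : δ ≠ β)
    (hδD : δ ∈ D) (hνδ : ν ≤ δ.cof) :
    β ∈ Γ ∩ (D ∩ {α | α < κ.ord ∧ ν ≤ α.cof}) ∧ δ ∈ C β := by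
  obtain ⟨hδlt, hδC⟩ := hC.lt_and_mem_of_isAccPt hβ hδ hδβ
  refine ⟨⟨hβ, ?_, hΓ hβ, ?_⟩, hδC⟩
  · by_contra hβD
    obtain ⟨x, hxC, -, hxδ⟩ := (isAccPt_iff.1 hδ).2 0 hδ.1
    refine hxδ.not_ge ((le_csSup (bddAbove_inter_Iio D β) ⟨hδD, hδlt⟩).trans ?_)
    exact (h2 β hβ hβD (hδ.1.trans hδlt)).trans (csInf_le' hxC)
  · by_contra! hcof
    exact (mk_lt_of_otp_lt (h1 β hβ hcof)).not_ge
      ((lift_le.2 hνδ).trans (lift_cof_le_mk_of_isAccPt hδ))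

theorem statement9
    (κ : Cardinal.{0}) (hκreg : κ.IsRegular) (hκunc : Cardinal.aleph0 < κ)
    (Γ : Set Ordinal.{0}) (hΓ : Γ ⊆ Iio κ.ord)
    (C : Ordinal.{0} → Set Ordinal.{0}) (hC : IsCSeqOn Γ C)
    (D : Set Ordinal.{0}) (hD : IsClubIn D κ.ord)
    (ν : Cardinal.{0})
    (hstat : IsStationaryIn (Γ ∩ {α | α < κ.ord ∧ ν ≤ α.cof}) κ.ord)
    (h1 : ∀ β ∈ Γ, β.cof < ν → otp (C β) < Ordinal.lift.{1} ν.ord)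
    (h2 : ∀ β ∈ Γ, β ∉ D → 0 < β → sSup (D ∩ Iio β) ≤ sInf (C β)) :
    chiOfOn κ Γ C = chiOfOn κ (Γ ∩ (D ∩ {α | α < κ.ord ∧ ν ≤ α.cof})) C := by
  have hΓ'κ : Γ ∩ (D ∩ {α | α < κ.ord ∧ ν ≤ α.cof}) ⊆ Iio κ.ord := fun _ hβ => hΓ hβ.1
  have hΓ'ub : IsUnboundedIn (Γ ∩ (D ∩ {α | α < κ.ord ∧ ν ≤ α.cof})) κ.ord := fun ζ hζ =>
    (hstat.isUnboundedIn_inter (isSuccLimit_ord hκreg.aleph0_le) hD ζ hζ).imp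
      fun _ ⟨⟨⟨hxΓ, hxν⟩, hxD⟩, hx⟩ => ⟨⟨hxΓ, hxD, hxν⟩, hx⟩
  unfold chiOfOn
  congr 1
  ext χ
  refine and_congr_right fun hχκ => ⟨fun hcov => ?_, fun hcov => hcov.mono inter_subset_left⟩
  rcases le_or_gt κ (Order.succ χ) with hκχ | hχκ
  · exact cseqCovers_of_le_succ hκreg hχκ hκχ hΓ'κ hΓ'ub fun β hβ => hC β hβ.1
  · exact cseqCovers_of_succ_lt hκreg hκunc hχκ (mk_eq_of_isUnboundedIn hκreg hΓ'κ hΓ'ub) hD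
      (fun E hE => (hstat E hE).mono (inter_subset_inter_left _ inter_subset_right))
      (fun β hβ δ => mem_restrict_of_isAccPt hΓ hC h1 h2 hβ) hcov

end CSeq
end
end
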